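/- arXiv:1211.2662 — 8 statements merged into one kernel-verified Lean document; each statement's English description precedes it below -/
import Mathlib

section
/- If S is a strongly connected component of the pair-digraph H+, then the set S' = {(u,v) : (v,u) ∈ S} is also a strongly connected component of H+. -/
variable {V : Type*}

/-- Arc of the pair-digraph H⁺: from (u,v) to (u',v) when u,v have the same color,
uu' is an edge and vu' is a non-edge; from (u,v) to (u,v') when u,v have different
colors, vv' is an edge and uv is a non-edge.  Vertices of H⁺ are pairs of distinct
vertices of H. -/
def PDArc (G : SimpleGraph V) (c : V → Bool) (p q : V × V) : Prop :=
  p.1 ≠ p.2 ∧ q.1 ≠ q.2 ∧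
    ((c p.1 = c p.2 ∧ q.2 = p.2 ∧ G.Adj p.1 q.1 ∧ ¬ G.Adj p.2 q.1) ∨
     (c p.1 ≠ c p.2 ∧ q.1 = p.1 ∧ G.Adj p.2 q.2 ∧ ¬ G.Adj p.1 p.2))

/-- Reachability by directed paths in the pair-digraph. -/
def PDReach (G : SimpleGraph V) (c : V → Bool) : V × V → V × V → Prop :=
  Relation.ReflTransGen (PDArc G c)

/-- `S` is a strongly connected component of the pair-digraph. -/
def PDSCC (G : SimpleGraph V) (c : V → Bool) (S : Set (V × V)) : Prop :=
  S.Nonempty ∧ ∀ p ∈ S, ∀ q, q ∈ S ↔ (PDReach G c p q ∧ PDReach G c q p)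

/-- A non-trivial strongly connected component (more than one vertex). -/
def PDSCCNontriv (G : SimpleGraph V) (c : V → Bool) (S : Set (V × V)) : Prop :=
  PDSCC G c S ∧ ∃ p ∈ S, ∃ q ∈ S, p ≠ q

/-- The coupled set S' = {(u,v) : (v,u) ∈ S}. -/
def PDCoupled (S : Set (V × V)) : Set (V × V) := {p | (p.2, p.1) ∈ S}

/-- A linear ordering avoids the forbidden patterns: there are no a < b < x with
a, b in the same color class, x in the opposite one, ax an edge and bx a non-edge. -/
def GoodOrder (G : SimpleGraph V) (c : V → Bool) (r : LinearOrder V) : Prop :=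
  ∀ a b x : V, r.lt a b → r.lt b x → c a = c b → c a ≠ c x → G.Adj a x → G.Adj b x

/-- `ab` and `xy` are independent edges: the four vertices are distinct and induce
exactly the two edges `ab` and `xy`. -/
def IndepEdges (G : SimpleGraph V) (a b x y : V) : Prop :=
  a ≠ b ∧ a ≠ x ∧ a ≠ y ∧ b ≠ x ∧ b ≠ y ∧ x ≠ y ∧
    G.Adj a b ∧ G.Adj x y ∧ ¬ G.Adj a x ∧ ¬ G.Adj a y ∧ ¬ G.Adj b x ∧ ¬ G.Adj b y

section Swap

variable {G : SimpleGraph V} {c : V → Bool}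

/-- The two arc types are exchanged; bipartiteness supplies the new colour condition. -/
theorem PDArc.swap (hbip : ∀ x y : V, G.Adj x y → c x ≠ c y) {p q : V × V}
    (h : PDArc G c p q) : PDArc G c q.swap p.swap := by
  obtain ⟨hp, hq, ⟨hc, hq2, hadj, hnadj⟩ | ⟨hc, hq1, hadj, hnadj⟩⟩ := h
  · refine ⟨Ne.symm hq, Ne.symm hp, Or.inr ⟨?_, hq2.symm, hadj.symm, ?_⟩⟩
    · simpa [hq2, hc] using hbip _ _ hadj
    · simpa [hq2] using hnadj
  · refine ⟨Ne.symm hq, Ne.symm hp,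
      Or.inl ⟨?_, hq1.symm, hadj.symm, by simpa [hq1] using hnadj⟩⟩
    simpa [hq1] using (Bool.eq_not_of_ne (hbip _ _ hadj).symm).trans (Bool.eq_not_of_ne hc).symm

theorem PDReach.swap (hbip : ∀ x y : V, G.Adj x y → c x ≠ c y) {p q : V × V}
    (h : PDReach G c p q) : PDReach G c q.swap p.swap := by
  induction h with
  | refl => exact .refl
  | tail _ hqr ih => exact .head (hqr.swap hbip) ih

theorem pdReach_swap_iff (hbip : ∀ x y : V, G.Adj x y → c x ≠ c y) {p q : V × V} :
    PDReach G c p.swap q.swap ↔ PDReach G c q p :=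
  ⟨fun h => by simpa using h.swap hbip, fun h => h.swap hbip⟩

end Swap

/-- If S is a strongly connected component of H⁺, so is S' = {(u,v) : (v,u) ∈ S}. -/
theorem stmt4 (G : SimpleGraph V) (c : V → Bool)
    (hbip : ∀ x y : V, G.Adj x y → c x ≠ c y)
    (S : Set (V × V)) (hS : PDSCC G c S) :
    PDSCC G c (PDCoupled S) := by
  obtain ⟨⟨p₀, hp₀⟩, hS⟩ := hS
  refine ⟨⟨p₀.swap, hp₀⟩, fun p hp q => ?_⟩
  change q.swap ∈ S ↔ _
  rw [hS p.swap hp, pdReach_swap_iff hbip, pdReach_swap_iff hbip, and_comm]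
end

section
/- If the pair-digraph H+ contains a pair (u,v) such that (u,v) and (v,u) lie in the same strongly connected component (i.e., each is reachable from the other), then H admits no linear ordering of its vertices avoiding the forbidden patterns. -/
variable {V : Type*}

/-!
An ordering avoiding the forbidden patterns orients every pair of distinct vertices, and each arc
of H⁺ carries a pair with `u < v` to a pair with `u' < v'`: otherwise the arc's defining edge and
non-edge would form a forbidden pattern. Hence `u < v` is transported along directed paths, and
mutual reachability of `(u, v)` and `(v, u)` would force both `u < v` and `v < u`.
-/

section Order

variable [LinearOrder V] {G : SimpleGraph V} {c : V → Bool}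

theorem PDArc.lt_of_lt (hbip : ∀ x y : V, G.Adj x y → c x ≠ c y)
    (hg : GoodOrder G c ‹LinearOrder V›) {p q : V × V} (hpq : PDArc G c p q)
    (hp : p.1 < p.2) : q.1 < q.2 := by
  obtain ⟨a, b⟩ := p
  obtain ⟨a', b'⟩ := q
  obtain ⟨-, hq, ⟨hc, rfl, hadj, hnadj⟩ | ⟨hc, rfl, hadj, hnadj⟩⟩ := hpq
  · refine (lt_or_gt_of_ne hq).resolve_right fun hb'a' => hnadj ?_
    exact hg a b' a' hp hb'a' hc (hbip a a' hadj) hadj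
  · refine (lt_or_gt_of_ne hq).resolve_right fun hb'a' => hnadj ?_
    have hcb' : c b' = c a' :=
      (Bool.eq_not_of_ne (hbip b b' hadj).symm).trans (Bool.eq_not_of_ne hc).symm
    exact hg b' a' b hb'a' hp hcb' (hcb' ▸ hc) hadj.symm

theorem PDReach.lt_of_lt (hbip : ∀ x y : V, G.Adj x y → c x ≠ c y)
    (hg : GoodOrder G c ‹LinearOrder V›) {p q : V × V} (hpq : PDReach G c p q)
    (hp : p.1 < p.2) : q.1 < q.2 := by
  induction hpq with
  | refl => exact hp
  | tail _ harc ih => exact harc.lt_of_lt hbip hg ih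

end Order

/-- If (u,v) and (v,u) are mutually reachable in H⁺, then H has no linear ordering
avoiding the forbidden patterns. -/
theorem stmt5 (G : SimpleGraph V) (c : V → Bool)
    (hbip : ∀ x y : V, G.Adj x y → c x ≠ c y)
    (u v : V) (huv : u ≠ v)
    (h1 : PDReach G c (u, v) (v, u)) (h2 : PDReach G c (v, u) (u, v)) :
    ∀ r : LinearOrder V, ¬ GoodOrder G c r := by
  intro r hg
  let := r
  rcases lt_or_gt_of_ne huv with huv | hvu
  · exact (h1.lt_of_lt hbip hg huv).asymm huv
  · exact (h2.lt_of_lt hbip hg hvu).asymm hvu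
end

section
/- If ab and cd are independent edges of H (the induced subgraph on {a,b,c,d} has exactly the two edges ab and cd), then the pairs (a,c), (a,d), (b,c), (b,d) all lie in one strongly connected component of H+; in particular, if a and c have the same color, then (a,c), (b,c), (b,d), (a,d) form a directed closed walk of length four in H+ in that cyclic order. -/
variable {V : Type*}

/-! If `c a = c x`, bipartiteness forces `c b = c y ≠ c a`, and the four non-edges between
`{a, b}` and `{x, y}` make `(a,x) → (b,x) → (b,y) → (a,y) → (a,x)` a directed cycle of H⁺;
otherwise `c a = c y` and the same holds with `x` and `y` exchanged. Any two vertices of a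
directed cycle reach each other. -/

theorem Relation.reflTransGen_of_cycle4 {α : Type*} {r : α → α → Prop} {p₁ p₂ p₃ p₄ : α}
    (h₁₂ : r p₁ p₂) (h₂₃ : r p₂ p₃) (h₃₄ : r p₃ p₄) (h₄₁ : r p₄ p₁) {p q : α}
    (hp : p ∈ ({p₁, p₂, p₃, p₄} : Set α)) (hq : q ∈ ({p₁, p₂, p₃, p₄} : Set α)) :
    Relation.ReflTransGen r p q := by
  have to_p₁ : Relation.ReflTransGen r p p₁ := by
    rcases hp with rfl | rfl | rfl | rfl
    · exact .refl
    · exact .head h₂₃ (.head h₃₄ (.single h₄₁))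
    · exact .head h₃₄ (.single h₄₁)
    · exact .single h₄₁
  have from_p₁ : Relation.ReflTransGen r p₁ q := by
    rcases hq with rfl | rfl | rfl | rfl
    · exact .refl
    · exact .single h₁₂
    · exact .head h₁₂ (.single h₂₃)
    · exact .head h₁₂ (.head h₂₃ (.single h₃₄))
  exact to_p₁.trans from_p₁

theorem Bool.eq_of_ne_of_ne {u v w : Bool} (huv : u ≠ v) (hvw : v ≠ w) : u = w := by
  revert u v w; decide

section

variable {G : SimpleGraph V} {a b x y : V}

theorem IndepEdges.swap_right (h : IndepEdges G a b x y) : IndepEdges G a b y x := by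
  obtain ⟨hab, hax, hay, hbx, hby, hxy, eab, exy, nax, nay, nbx, nby⟩ := h
  exact ⟨hab, hay, hax, hby, hbx, hxy.symm, eab, exy.symm, nay, nax, nby, nbx⟩

theorem IndepEdges.adj_right (h : IndepEdges G a b x y) : G.Adj x y := h.2.2.2.2.2.2.2.1

theorem IndepEdges.pdArc_cycle {c : V → Bool} (hbip : ∀ u v : V, G.Adj u v → c u ≠ c v)
    (hind : IndepEdges G a b x y) (hc : c a = c x) :
    PDArc G c (a, x) (b, x) ∧ PDArc G c (b, x) (b, y) ∧
      PDArc G c (b, y) (a, y) ∧ PDArc G c (a, y) (a, x) := by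
  obtain ⟨-, hax, hay, hbx, hby, -, eab, exy, -, nay, nbx, -⟩ := hind
  have cab := hbip a b eab
  have cxy := hbip x y exy
  have cbx : c b ≠ c x := hc ▸ cab.symm
  have cay : c a ≠ c y := hc ▸ cxy
  have cby : c b = c y := Bool.eq_of_ne_of_ne cbx cxy
  exact ⟨⟨hax, hbx, .inl ⟨hc, rfl, eab, fun h => nbx h.symm⟩⟩,
    ⟨hbx, hby, .inr ⟨cbx, rfl, exy, nbx⟩⟩,
    ⟨hby, hay, .inl ⟨cby, rfl, eab.symm, fun h => nay h.symm⟩⟩,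
    ⟨hay, hax, .inr ⟨cay, rfl, exy.symm, nay⟩⟩⟩

end

/-- Independent edges ab, xy put the four pairs (a,x), (a,y), (b,x), (b,y) into one
strongly connected component of H⁺; if a and x have the same color they form a
directed four-cycle in the order (a,x), (b,x), (b,y), (a,y). -/
theorem stmt6 (G : SimpleGraph V) (c : V → Bool)
    (hbip : ∀ x y : V, G.Adj x y → c x ≠ c y)
    (a b x y : V) (hind : IndepEdges G a b x y) :
    (∀ p ∈ ({(a, x), (a, y), (b, x), (b, y)} : Set (V × V)),
      ∀ q ∈ ({(a, x), (a, y), (b, x), (b, y)} : Set (V × V)), PDReach G c p q) ∧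
    (c a = c x →
      PDArc G c (a, x) (b, x) ∧ PDArc G c (b, x) (b, y) ∧
      PDArc G c (b, y) (a, y) ∧ PDArc G c (a, y) (a, x)) := by
  wlog hc : c a = c x generalizing x y
  · have hcy : c a = c y := Bool.eq_of_ne_of_ne hc (hbip x y hind.adj_right)
    refine ⟨fun p hp q hq => (this y x hind.swap_right hcy).1 p ?_ q ?_, fun h => absurd h hc⟩
    all_goals simp only [Set.mem_insert_iff, Set.mem_singleton_iff] at *; tauto
  obtain ⟨h₁, h₂, h₃, h₄⟩ := hind.pdArc_cycle hbip hc
  refine ⟨fun p hp q hq => Relation.reflTransGen_of_cycle4 h₁ h₂ h₃ h₄ ?_ ?_,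
    fun _ => ⟨h₁, h₂, h₃, h₄⟩⟩
  all_goals simp only [Set.mem_insert_iff, Set.mem_singleton_iff] at *; tauto
end

section
/- If S is a non-trivial strongly connected component of the pair-digraph H+ containing the vertex (u,v), then there exist vertices u' and v' of H such that uu' and vv' are independent edges of H, and S contains the four vertices (u,v), (u,v'), (u',v), (u',v'). -/
variable {V : Type*}

/-!
If `u` and `v` have the same colour, the first arc of `S` leaving `(u, v)` is `(u, v) → (u', v)`
and, by bipartiteness, the last arc entering it is `(u, v') → (u, v)`; if their colours differ, the
first two arcs leaving `(u, v)` are `(u, v) → (u, v') → (u', v')`. Either way the arc conditions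
give the edges `uu'`, `vv'` and two of the four cross non-edges, while the other two join vertices
of the same colour. Conversely, independent edges `uu'`, `vv'` close the four pairs into a directed
4-cycle of the pair-digraph, so all of them lie in the component of `(u, v)`.
-/

variable {G : SimpleGraph V} {c : V → Bool}

theorem Bool.eq_of_ne_of_ne_s7 {a b d : Bool} (hab : a ≠ b) (hbd : b ≠ d) : a = d := by
  cases a <;> cases b <;> cases d <;> simp_all

theorem not_adj_of_color_eq (hbip : ∀ x y : V, G.Adj x y → c x ≠ c y) {x y : V}
    (h : c x = c y) : ¬ G.Adj x y :=
  fun hxy => hbip x y hxy h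

theorem color_eq_of_adj_of_adj (hbip : ∀ x y : V, G.Adj x y → c x ≠ c y) {x x' y y' : V}
    (hx : G.Adj x x') (hy : G.Adj y y') (h : c x = c y) : c x' = c y' :=
  Bool.eq_of_ne_of_ne_s7 (hbip x x' hx).symm (h ▸ hbip y y' hy)

namespace PDArc

theorem exists_eq_of_color_eq {u v : V} {q : V × V} (hc : c u = c v)
    (h : PDArc G c (u, v) q) : ∃ u', q = (u', v) ∧ G.Adj u u' ∧ ¬ G.Adj v u' := by
  obtain ⟨q1, q2⟩ := q
  obtain ⟨-, -, ⟨-, rfl, hadj, hnadj⟩ | ⟨hne, -⟩⟩ := h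
  · exact ⟨q1, rfl, hadj, hnadj⟩
  · exact absurd hc hne

theorem exists_eq_of_color_ne {u v : V} {q : V × V} (hc : c u ≠ c v)
    (h : PDArc G c (u, v) q) : ∃ v', q = (u, v') ∧ G.Adj v v' ∧ ¬ G.Adj u v := by
  obtain ⟨q1, q2⟩ := q
  obtain ⟨-, -, ⟨heq, -⟩ | ⟨-, rfl, hadj, hnadj⟩⟩ := h
  · exact absurd heq hc
  · exact ⟨q2, rfl, hadj, hnadj⟩

theorem exists_eq_of_color_eq_target (hbip : ∀ x y : V, G.Adj x y → c x ≠ c y) {p : V × V}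
    {u v : V} (hc : c u = c v) (h : PDArc G c p (u, v)) :
    ∃ v', p = (u, v') ∧ G.Adj v v' ∧ ¬ G.Adj u v' := by
  obtain ⟨p1, p2⟩ := p
  obtain ⟨-, -, ⟨hcp, rfl, hadj, -⟩ | ⟨-, rfl, hadj, hnadj⟩⟩ := h
  · exact absurd (hcp.trans hc.symm) (hbip _ _ hadj)
  · exact ⟨p2, rfl, hadj.symm, hnadj⟩

end PDArc

theorem PDSCC.mem_of_pdArc_cycle {S : Set (V × V)} (hS : PDSCC G c S) {p₀ p₁ p₂ p₃ : V × V}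
    (h₀ : p₀ ∈ S) (a₀ : PDArc G c p₀ p₁) (a₁ : PDArc G c p₁ p₂) (a₂ : PDArc G c p₂ p₃)
    (a₃ : PDArc G c p₃ p₀) : p₁ ∈ S ∧ p₂ ∈ S ∧ p₃ ∈ S := by
  have r₀ : PDReach G c p₀ p₁ := .single a₀
  have r₁ : PDReach G c p₀ p₂ := r₀.tail a₁
  have r₂ : PDReach G c p₀ p₃ := r₁.tail a₂
  have r₃ : PDReach G c p₃ p₀ := .single a₃
  have r₄ : PDReach G c p₂ p₀ := r₃.head a₂
  have r₅ : PDReach G c p₁ p₀ := r₄.head a₁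
  exact ⟨(hS.2 p₀ h₀ _).2 ⟨r₀, r₅⟩, (hS.2 p₀ h₀ _).2 ⟨r₁, r₄⟩, (hS.2 p₀ h₀ _).2 ⟨r₂, r₃⟩⟩

namespace PDSCCNontriv

variable {S : Set (V × V)} {p : V × V}

theorem exists_pdArc_from (hS : PDSCCNontriv G c S) (hp : p ∈ S) : ∃ q ∈ S, PDArc G c p q := by
  obtain ⟨w, hw, hwp⟩ := Set.Nontrivial.exists_ne hS.2 p
  obtain ⟨hpw, hwp'⟩ := (hS.1.2 p hp w).1 hw
  obtain rfl | ⟨q, hq, hqw⟩ := Relation.ReflTransGen.cases_head hpw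
  · exact absurd rfl hwp
  · exact ⟨q, (hS.1.2 p hp q).2 ⟨.single hq, hqw.trans hwp'⟩, hq⟩

theorem exists_pdArc_to (hS : PDSCCNontriv G c S) (hp : p ∈ S) : ∃ q ∈ S, PDArc G c q p := by
  obtain ⟨w, hw, hwp⟩ := Set.Nontrivial.exists_ne hS.2 p
  obtain ⟨hpw, hwp'⟩ := (hS.1.2 p hp w).1 hw
  obtain rfl | ⟨q, hwq, hq⟩ := Relation.ReflTransGen.cases_tail hwp'
  · exact absurd rfl hwp
  · exact ⟨q, (hS.1.2 p hp q).2 ⟨hpw.trans hwq, .single hq⟩, hq⟩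

end PDSCCNontriv

namespace IndepEdges

variable {u u' v v' : V}

theorem of_not_adj (huv : u ≠ v) (hu : G.Adj u u') (hv : G.Adj v v') (h₁ : ¬ G.Adj u v)
    (h₂ : ¬ G.Adj u v') (h₃ : ¬ G.Adj u' v) (h₄ : ¬ G.Adj u' v') : IndepEdges G u u' v v' := by
  refine ⟨hu.ne, huv, ?_, ?_, ?_, hv.ne, hu, hv, h₁, h₂, h₃, h₄⟩
  · rintro rfl; exact h₁ hv.symm
  · rintro rfl; exact h₁ hu
  · rintro rfl; exact h₃ hv.symm

theorem swap_left (h : IndepEdges G u u' v v') : IndepEdges G u' u v v' := by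
  obtain ⟨h₁, h₂, h₃, h₄, h₅, h₆, h₇, h₈, h₉, h₁₀, h₁₁, h₁₂⟩ := h
  exact ⟨h₁.symm, h₄, h₅, h₂, h₃, h₆, h₇.symm, h₈, h₁₁, h₁₂, h₉, h₁₀⟩

theorem swap_right_s7 (h : IndepEdges G u u' v v') : IndepEdges G u u' v' v := by
  obtain ⟨h₁, h₂, h₃, h₄, h₅, h₆, h₇, h₈, h₉, h₁₀, h₁₁, h₁₂⟩ := h
  exact ⟨h₁, h₃, h₂, h₅, h₄, h₆.symm, h₇, h₈.symm, h₁₀, h₉, h₁₂, h₁₁⟩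

theorem pdArc_of_color_eq (h : IndepEdges G u u' v v') (hc : c u = c v) :
    PDArc G c (u, v) (u', v) := by
  obtain ⟨-, huv, -, hu'v, -, -, hu, -, -, -, hnu'v, -⟩ := h
  exact ⟨huv, hu'v, .inl ⟨hc, rfl, hu, fun h => hnu'v h.symm⟩⟩

theorem pdArc_of_color_ne (h : IndepEdges G u u' v v') (hc : c u ≠ c v) :
    PDArc G c (u, v) (u, v') := by
  obtain ⟨-, huv, huv', -, -, -, -, hv, hnuv, -, -, -⟩ := h
  exact ⟨huv, huv', .inr ⟨hc, rfl, hv, hnuv⟩⟩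

theorem mem_of_pdSCC (hbip : ∀ x y : V, G.Adj x y → c x ≠ c y) (h : IndepEdges G u u' v v')
    {S : Set (V × V)} (hS : PDSCC G c S) (huv : (u, v) ∈ S) :
    (u, v') ∈ S ∧ (u', v) ∈ S ∧ (u', v') ∈ S := by
  obtain ⟨-, -, -, -, -, -, hadju, hadjv, -⟩ := id h
  have hu : c u' ≠ c u := (hbip u u' hadju).symm
  have hv : c v' ≠ c v := (hbip v v' hadjv).symm
  by_cases hc : c u = c v
  · obtain ⟨h₁, h₂, h₃⟩ := hS.mem_of_pdArc_cycle huv (h.pdArc_of_color_eq hc)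
      (h.swap_left.pdArc_of_color_ne (hc ▸ hu))
      (h.swap_left.swap_right_s7.pdArc_of_color_eq (Bool.eq_of_ne_of_ne_s7 hu (hc ▸ hv.symm)))
      (h.swap_right_s7.pdArc_of_color_ne (hc ▸ hv.symm))
    exact ⟨h₃, h₁, h₂⟩
  · have hu' : c u' = c v := Bool.eq_of_ne_of_ne_s7 hu hc
    obtain ⟨h₁, h₂, h₃⟩ := hS.mem_of_pdArc_cycle huv (h.pdArc_of_color_ne hc)
      (h.swap_right_s7.pdArc_of_color_eq (Bool.eq_of_ne_of_ne_s7 hc hv.symm))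
      (h.swap_left.swap_right_s7.pdArc_of_color_ne (hu' ▸ hv.symm))
      (h.swap_left.pdArc_of_color_eq hu')
    exact ⟨h₁, h₃, h₂⟩

end IndepEdges

/-- A non-trivial component containing (u,v) yields independent edges uu', vv' and
contains the four pairs (u,v), (u,v'), (u',v), (u',v'). -/
theorem stmt7 (G : SimpleGraph V) (c : V → Bool)
    (hbip : ∀ x y : V, G.Adj x y → c x ≠ c y)
    (S : Set (V × V)) (hS : PDSCCNontriv G c S)
    (u v : V) (huv : (u, v) ∈ S) :
    ∃ u' v' : V, IndepEdges G u u' v v' ∧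
      (u, v') ∈ S ∧ (u', v) ∈ S ∧ (u', v') ∈ S := by
  suffices ∃ u' v', IndepEdges G u u' v v' from
    this.imp fun u' ⟨v', h⟩ => ⟨v', h, h.mem_of_pdSCC hbip hS.1 huv⟩
  obtain ⟨q, hqS, hq⟩ := hS.exists_pdArc_from huv
  by_cases hc : c u = c v
  · obtain ⟨u', rfl, hu, hvu'⟩ := hq.exists_eq_of_color_eq hc
    obtain ⟨p, -, hp⟩ := hS.exists_pdArc_to huv
    obtain ⟨v', rfl, hv, huv'⟩ := hp.exists_eq_of_color_eq_target hbip hc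
    exact ⟨u', v', .of_not_adj hq.1 hu hv (not_adj_of_color_eq hbip hc) huv'
      (fun h => hvu' h.symm) (not_adj_of_color_eq hbip (color_eq_of_adj_of_adj hbip hu hv hc))⟩
  · obtain ⟨v', rfl, hv, hnuv⟩ := hq.exists_eq_of_color_ne hc
    have hcv' : c u = c v' := Bool.eq_of_ne_of_ne_s7 hc (hbip v v' hv)
    obtain ⟨q', -, hq'⟩ := hS.exists_pdArc_from hqS
    obtain ⟨u', rfl, hu, hv'u'⟩ := hq'.exists_eq_of_color_eq hcv'
    exact ⟨u', v', .of_not_adj hq.1 hu hv hnuv (not_adj_of_color_eq hbip hcv')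
      (not_adj_of_color_eq hbip (color_eq_of_adj_of_adj hbip hu hv.symm hcv'))
      (fun h => hv'u' h.symm)⟩
end

section
/- Every non-trivial strongly connected component of the pair-digraph H+ contains at least four vertices. -/
variable {V : Type*}

/-! An arc of H⁺ moves exactly one coordinate of a pair along an edge of H, so in a bipartite
H it flips whether the two coordinates have the same colour: every closed walk in H⁺ has even
length. H⁺ also has no loops and no 2-cycles, because the type of an arc (which coordinate
moves) is determined by the colour pattern of its tail. Hence any closed walk through a vertex
of a non-trivial component has four consecutive vertices that are pairwise distinct. -/

variable {G : SimpleGraph V} {c : V → Bool} {p q : V × V}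

namespace PDArc

theorem ne (h : PDArc G c p q) : p ≠ q := by
  rcases h with ⟨_, _, ⟨_, _, hadj, _⟩ | ⟨_, _, hadj, _⟩⟩ <;>
    · rintro rfl
      exact hadj.ne rfl

theorem sameColor_iff (hbip : ∀ x y : V, G.Adj x y → c x ≠ c y) (h : PDArc G c p q) :
    c q.1 = c q.2 ↔ c p.1 ≠ c p.2 := by
  rcases h with ⟨_, _, ⟨hc, h2, hadj, _⟩ | ⟨hc, h1, hadj, _⟩⟩
  · have := hbip _ _ hadj
    rw [h2]
    revert hc this
    cases c p.1 <;> cases c p.2 <;> cases c q.1 <;> decide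
  · have := hbip _ _ hadj
    rw [h1]
    revert hc this
    cases c p.1 <;> cases c p.2 <;> cases c q.2 <;> decide

theorem not_symm (hbip : ∀ x y : V, G.Adj x y → c x ≠ c y) (hpq : PDArc G c p q)
    (hqp : PDArc G c q p) : False := by
  have hpar := hpq.sameColor_iff hbip
  rcases hpq with ⟨_, _, ⟨hc, -, hadj, _⟩ | ⟨hc, -, hadj, _⟩⟩ <;>
    rcases hqp with ⟨_, _, ⟨hc', hp2, -, _⟩ | ⟨hc', hp1, -, _⟩⟩
  · exact hpar.mp hc' hc
  · exact hadj.ne hp1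
  · exact hadj.ne hp2
  · exact hc' (hpar.mpr hc)

end PDArc

theorem PDSCC.mem_of_reach {S : Set (V × V)} (hS : PDSCC G c S) (hp : p ∈ S)
    (hpq : PDReach G c p q) (hqp : PDReach G c q p) : q ∈ S :=
  (hS.2 p hp q).mpr ⟨hpq, hqp⟩

/-- Every non-trivial strongly connected component of H⁺ has at least four vertices. -/
theorem stmt8 (G : SimpleGraph V) (c : V → Bool)
    (hbip : ∀ x y : V, G.Adj x y → c x ≠ c y)
    (S : Set (V × V)) (hS : PDSCCNontriv G c S) :
    ∃ p q r s : V × V, p ∈ S ∧ q ∈ S ∧ r ∈ S ∧ s ∈ S ∧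
      p ≠ q ∧ p ≠ r ∧ p ≠ s ∧ q ≠ r ∧ q ≠ s ∧ r ≠ s := by
  obtain ⟨hSCC, p, hp, q, hq, hpq⟩ := hS
  obtain ⟨hreach, hback⟩ := (hSCC.2 p hp q).mp hq
  obtain ⟨p₁, a₁, h₁⟩ := (Relation.ReflTransGen.cases_head hreach).resolve_left hpq
  obtain ⟨p₂, a₂, h₂⟩ :=
    (Relation.ReflTransGen.cases_head (h₁.trans hback)).resolve_left a₁.ne.symm
  have hp₂ : p₂ ≠ p := by
    rintro rfl
    exact a₁.not_symm hbip a₂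
  obtain ⟨p₃, a₃, h₃⟩ := (Relation.ReflTransGen.cases_head h₂).resolve_left hp₂
  have r₁ : PDReach G c p p₁ := .single a₁
  have r₂ : PDReach G c p p₂ := r₁.tail a₂
  have r₃ : PDReach G c p p₃ := r₂.tail a₃
  have hp₃ : p ≠ p₃ := by
    rintro rfl
    have := a₁.sameColor_iff hbip
    have := a₂.sameColor_iff hbip
    have := a₃.sameColor_iff hbip
    tauto
  refine ⟨p, p₁, p₂, p₃, hp,
    hSCC.mem_of_reach hp r₁ ((Relation.ReflTransGen.single a₂).trans h₂),
    hSCC.mem_of_reach hp r₂ h₂, hSCC.mem_of_reach hp r₃ h₃,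
    a₁.ne, hp₂.symm, hp₃, a₂.ne, ?_, a₃.ne⟩
  rintro rfl
  exact a₂.not_symm hbip a₃
end

section
/- Every directed path in the condensation of the pair-digraph H+ has at most three vertices. Equivalently, H+ contains no directed path visiting four pairwise distinct strongly connected components. -/
variable {V : Type*}

/-
A path leaving one strongly connected component of `H⁺` for a later one uses an arc `a → b` with
no path back from `b` to `a`. If the arc moves the first coordinate of `a = (u, v)` (so `u`, `v`
have the same color), every neighbour of `v` is a neighbour of `u`: otherwise a three-arc detour
leads from `b` back to `a`. Then no arc enters `a`, since bipartiteness rules out an arc moving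
the first coordinate and domination one moving the second. Symmetrically, if the arc moves the
second coordinate then no arc leaves `b`. So on a path through four components `S₁ → S₂ → S₃ → S₄`,
the arc leaving `S₂` either starts at a source, forcing `S₁ = S₂`, or ends at a sink, forcing
`S₃ = S₄`.
-/

theorem Bool.eq_of_ne_of_ne_s12 {x y z : Bool} (hx : x ≠ z) (hy : y ≠ z) : x = y := by
  revert hx hy; cases x <;> cases y <;> cases z <;> decide

theorem Relation.ReflTransGen.exists_step_not_reflTransGen_back {α : Type*} {r : α → α → Prop}
    {p q : α} (h : Relation.ReflTransGen r p q) (hqp : ¬ Relation.ReflTransGen r q p) :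
    ∃ a b, Relation.ReflTransGen r p a ∧ r a b ∧ Relation.ReflTransGen r b q ∧
      ¬ Relation.ReflTransGen r b a := by
  induction h with
  | refl => exact absurd .refl hqp
  | @tail a b hpa hab ih =>
    by_cases hba : Relation.ReflTransGen r b a
    · obtain ⟨x, y, hpx, hxy, hya, hyx⟩ := ih fun hap => hqp (hba.trans hap)
      exact ⟨x, y, hpx, hxy, hya.tail hab, hyx⟩
    · exact ⟨a, b, hpa, hab, .refl, hba⟩

section PairDigraph

variable {G : SimpleGraph V} {c : V → Bool}

theorem PDSCC.eq_of_pdReach {S T : Set (V × V)} {p q : V × V} (hS : PDSCC G c S)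
    (hT : PDSCC G c T) (hp : p ∈ S) (hq : q ∈ T) (hpq : PDReach G c p q)
    (hqp : PDReach G c q p) : S = T := by
  ext r
  rw [hS.2 p hp r, hT.2 q hq r]
  exact ⟨fun ⟨hpr, hrp⟩ => ⟨hqp.trans hpr, hrp.trans hpq⟩,
    fun ⟨hqr, hrq⟩ => ⟨hpq.trans hqr, hrq.trans hqp⟩⟩

theorem eq_of_pdReach_to_source {p a : V × V} (hpa : PDReach G c p a)
    (ha : ∀ q, ¬ PDArc G c q a) : p = a := by
  rcases hpa.cases_tail with rfl | ⟨q, -, hqa⟩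
  · rfl
  · exact absurd hqa (ha q)

theorem eq_of_pdReach_from_sink {b p : V × V} (hbp : PDReach G c b p)
    (hb : ∀ q, ¬ PDArc G c b q) : b = p := by
  rcases hbp.cases_head with rfl | ⟨q, hbq, -⟩
  · rfl
  · exact absurd hbq (hb q)

theorem pdReach_back_of_adj_fst (hbip : ∀ x y : V, G.Adj x y → c x ≠ c y)
    {u v u' w : V} (huv : u ≠ v) (hu'v : u' ≠ v) (hc : c u = c v)
    (hu : G.Adj u u') (hv : ¬ G.Adj v u') (hw : G.Adj v w) (huw : ¬ G.Adj u w) :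
    PDReach G c (u', v) (u, v) := by
  have hcu' : c u ≠ c u' := hbip u u' hu
  have hcw : c v ≠ c w := hbip v w hw
  have hcwu : c w ≠ c u := fun h => hcw (hc.symm.trans h.symm)
  have hu'w : u' ≠ w := fun h => hv (h ▸ hw)
  have hu_ne_w : u ≠ w := fun h => hcwu (congrArg c h.symm)
  have arc₁ : PDArc G c (u', v) (u', w) :=
    ⟨hu'v, hu'w, .inr ⟨fun h => hcu' (hc.trans h.symm), rfl, hw, fun h => hv h.symm⟩⟩
  have arc₂ : PDArc G c (u', w) (u, w) :=
    ⟨hu'w, hu_ne_w, .inl ⟨Bool.eq_of_ne_of_ne_s12 hcu'.symm hcwu, rfl, hu.symm, fun h => huw h.symm⟩⟩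
  have arc₃ : PDArc G c (u, w) (u, v) := ⟨hu_ne_w, huv, .inr ⟨hcwu.symm, rfl, hw.symm, huw⟩⟩
  exact .head arc₁ (.head arc₂ (.single arc₃))

theorem pdReach_back_of_adj_snd (hbip : ∀ x y : V, G.Adj x y → c x ≠ c y)
    {u v v' z : V} (huv : u ≠ v) (huv' : u ≠ v') (hc : c u ≠ c v)
    (hv : G.Adj v v') (huv_adj : ¬ G.Adj u v) (hz : G.Adj u z) (hv'z : ¬ G.Adj v' z) :
    PDReach G c (u, v') (u, v) := by
  have hcv' : c v ≠ c v' := hbip v v' hv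
  have hcz : c u ≠ c z := hbip u z hz
  have hcuv' : c u = c v' := Bool.eq_of_ne_of_ne_s12 hc hcv'.symm
  have hzv' : z ≠ v' := fun h => hcz (h ▸ hcuv')
  have hzv : z ≠ v := fun h => huv_adj (h ▸ hz)
  have arc₁ : PDArc G c (u, v') (z, v') := ⟨huv', hzv', .inl ⟨hcuv', rfl, hz, hv'z⟩⟩
  have arc₂ : PDArc G c (z, v') (z, v) :=
    ⟨hzv', hzv, .inr ⟨fun h => hcz (hcuv'.trans h.symm), rfl, hv.symm, fun h => hv'z h.symm⟩⟩
  have arc₃ : PDArc G c (z, v) (u, v) :=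
    ⟨hzv, huv, .inl ⟨Bool.eq_of_ne_of_ne_s12 hcz.symm hc.symm, rfl, hz.symm, fun h => huv_adj h.symm⟩⟩
  exact .head arc₁ (.head arc₂ (.single arc₃))

theorem PDArc.forall_not_pdArc_of_not_pdReach_back (hbip : ∀ x y : V, G.Adj x y → c x ≠ c y)
    {a b : V × V} (hab : PDArc G c a b)
    (hba : ¬ PDReach G c b a) : (∀ q, ¬ PDArc G c q a) ∨ ∀ q, ¬ PDArc G c b q := by
  obtain ⟨u, v⟩ := a
  obtain ⟨x, y⟩ := b
  obtain ⟨huv, hxy, ⟨hc, rfl, hux, hvx⟩ | ⟨hc, rfl, hvy, huv_adj⟩⟩ := hab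
  · left
    rintro ⟨q₁, q₂⟩ ⟨-, -, ⟨hcq, rfl, hq₁u, -⟩ | ⟨-, rfl, hq₂v, huq₂⟩⟩
    · exact hbip q₁ u hq₁u (hcq.trans hc.symm)
    · exact hba (pdReach_back_of_adj_fst hbip huv hxy hc hux hvx hq₂v.symm huq₂)
  · right
    rintro ⟨q₁, q₂⟩ ⟨-, -, ⟨-, rfl, hxq₁, hyq₁⟩ | ⟨hcq, rfl, -, -⟩⟩
    · exact hba (pdReach_back_of_adj_snd hbip huv hxy hc hvy huv_adj hxq₁ hyq₁)
    · exact hcq (Bool.eq_of_ne_of_ne_s12 hc (hbip v y hvy).symm)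

end PairDigraph

/-- H⁺ contains no directed path visiting four pairwise distinct strongly
connected components: every directed path in the condensation has at most
three vertices. -/
theorem stmt12 (G : SimpleGraph V) (c : V → Bool)
    (hbip : ∀ x y : V, G.Adj x y → c x ≠ c y)
    (S1 S2 S3 S4 : Set (V × V))
    (h1 : PDSCC G c S1) (h2 : PDSCC G c S2) (h3 : PDSCC G c S3) (h4 : PDSCC G c S4)
    (p1 p2 p3 p4 : V × V)
    (hp1 : p1 ∈ S1) (hp2 : p2 ∈ S2) (hp3 : p3 ∈ S3) (hp4 : p4 ∈ S4)
    (h12 : PDReach G c p1 p2) (h23 : PDReach G c p2 p3) (h34 : PDReach G c p3 p4) :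
    S1 = S2 ∨ S1 = S3 ∨ S1 = S4 ∨ S2 = S3 ∨ S2 = S4 ∨ S3 = S4 := by
  by_cases h32 : PDReach G c p3 p2
  · exact .inr <| .inr <| .inr <| .inl <| h2.eq_of_pdReach h3 hp2 hp3 h23 h32
  obtain ⟨a, b, h2a, hab, hb3, hba⟩ := h23.exists_step_not_reflTransGen_back h32
  rcases hab.forall_not_pdArc_of_not_pdReach_back hbip hba with ha | hb
  · obtain rfl := eq_of_pdReach_to_source (h12.trans h2a) ha
    exact .inl <| h1.eq_of_pdReach h2 hp1 hp2 h12 h2a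
  · obtain rfl := eq_of_pdReach_from_sink (hb3.trans h34) hb
    exact .inr <| .inr <| .inr <| .inr <| .inr <| h3.eq_of_pdReach h4 hp3 hp4 h34 hb3
end

section
/- If a bipartite graph H contains an exobiclique, then H is not an interval bigraph. -/
variable {V : Type*}

/-- H (with bipartition given by `c`) is an interval bigraph: there are real
intervals, one per vertex, such that vertices of different colors are adjacent
iff their intervals intersect. -/
def IsIntervalBigraph (G : SimpleGraph V) (c : V → Bool) : Prop :=
  ∃ l r : V → ℝ, ∀ x y : V, c x ≠ c y →
    (G.Adj x y ↔ ∃ t : ℝ, t ∈ Set.Icc (l x) (r x) ∧ t ∈ Set.Icc (l y) (r y))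

/-- x and y have incomparable neighborhoods inside N. -/
def NbhdIncomp (G : SimpleGraph V) (N : Set V) (x y : V) : Prop :=
  ¬ (N ∩ G.neighborSet x ⊆ N ∩ G.neighborSet y) ∧
  ¬ (N ∩ G.neighborSet y ⊆ N ∩ G.neighborSet x)

/-- H contains an exobiclique: a biclique with parts M, N, three vertices of the
first color class outside M with pairwise incomparable neighborhoods in N, and
three vertices of the second color class outside N with pairwise incomparable
neighborhoods in M. -/
def HasExobiclique (G : SimpleGraph V) (c : V → Bool) : Prop :=
  ∃ M N : Set V, M.Nonempty ∧ N.Nonempty ∧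
    (∀ v ∈ M, c v = true) ∧ (∀ v ∈ N, c v = false) ∧
    (∀ m ∈ M, ∀ n ∈ N, G.Adj m n) ∧
    (∃ b1 b2 b3 : V, b1 ≠ b2 ∧ b1 ≠ b3 ∧ b2 ≠ b3 ∧
      c b1 = true ∧ c b2 = true ∧ c b3 = true ∧
      b1 ∉ M ∧ b2 ∉ M ∧ b3 ∉ M ∧
      NbhdIncomp G N b1 b2 ∧ NbhdIncomp G N b1 b3 ∧ NbhdIncomp G N b2 b3) ∧
    (∃ w1 w2 w3 : V, w1 ≠ w2 ∧ w1 ≠ w3 ∧ w2 ≠ w3 ∧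
      c w1 = false ∧ c w2 = false ∧ c w3 = false ∧
      w1 ∉ N ∧ w2 ∉ N ∧ w3 ∉ N ∧
      NbhdIncomp G M w1 w2 ∧ NbhdIncomp G M w1 w3 ∧ NbhdIncomp G M w2 w3)

/-!
Let the intervals `I_v = [l v, r v]` represent `H`. Since every interval of `M` meets every
interval of `N`, the larger of `sup_M l` and `sup_N l` lies in every interval of the other
family; say every `I_n`, `n ∈ N`, contains the point `p`. A vertex `b` whose `N`-neighbourhood
is incomparable with another's cannot contain `p`, for otherwise it would see all of `N`, so
`I_b` lies strictly left or strictly right of `p`. As every `I_n` reaches `p`, the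
`N`-neighbourhoods of the vertices on the left grow with `r b`, those on the right shrink
with `l b`: two vertices on the same side have comparable neighbourhoods, and among three
vertices two lie on the same side.
-/

open Set

section CommonPoint

variable {α ι : Type*} [ConditionallyCompleteLinearOrder α] {l r : ι → α} {M N : Set ι}

theorem forall_mem_Icc_sSup_image_of_cross (hM : M.Nonempty)
    (hMN : ∀ m ∈ M, ∀ n ∈ N, l m ≤ r n) (hNM : ∀ n ∈ N, ∀ m ∈ M, l n ≤ r m)
    (hle : sSup (l '' N) ≤ sSup (l '' M)) :
    ∀ n ∈ N, sSup (l '' M) ∈ Icc (l n) (r n) := by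
  obtain ⟨m₀, hm₀⟩ := hM
  have hbdd : BddAbove (l '' N) := ⟨r m₀, forall_mem_image.2 fun n hn => hNM n hn m₀ hm₀⟩
  intro n hn
  exact ⟨(le_csSup hbdd (mem_image_of_mem l hn)).trans hle,
    csSup_le ⟨l m₀, mem_image_of_mem l hm₀⟩ (forall_mem_image.2 fun m hm => hMN m hm n hn)⟩

theorem exists_forall_mem_Icc_of_cross (hM : M.Nonempty) (hN : N.Nonempty)
    (hMN : ∀ m ∈ M, ∀ n ∈ N, l m ≤ r n ∧ l n ≤ r m) :
    (∃ p, ∀ n ∈ N, p ∈ Icc (l n) (r n)) ∨ (∃ p, ∀ m ∈ M, p ∈ Icc (l m) (r m)) := by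
  have hMN' : ∀ m ∈ M, ∀ n ∈ N, l m ≤ r n := fun m hm n hn => (hMN m hm n hn).1
  have hNM' : ∀ n ∈ N, ∀ m ∈ M, l n ≤ r m := fun n hn m hm => (hMN m hm n hn).2
  rcases le_total (sSup (l '' N)) (sSup (l '' M)) with hle | hle
  · exact .inl ⟨_, forall_mem_Icc_sSup_image_of_cross hM hMN' hNM' hle⟩
  · exact .inr ⟨_, forall_mem_Icc_sSup_image_of_cross hN hNM' hMN' hle⟩

end CommonPoint

theorem NbhdIncomp.symm {G : SimpleGraph V} {N : Set V} {x y : V}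
    (h : NbhdIncomp G N x y) : NbhdIncomp G N y x :=
  ⟨h.2, h.1⟩

def IsIntervalModel {α : Type*} [Preorder α] (G : SimpleGraph V) (c : V → Bool)
    (l r : V → α) : Prop :=
  ∀ x y : V, c x ≠ c y → (G.Adj x y ↔ ∃ t, t ∈ Icc (l x) (r x) ∧ t ∈ Icc (l y) (r y))

namespace IsIntervalModel

variable {α : Type*} [LinearOrder α] {G : SimpleGraph V} {c : V → Bool} {l r : V → α}
  {N : Set V} {p : α} {b b' x y : V}

theorem le_of_adj (h : IsIntervalModel G c l r) (hc : c x ≠ c y) (hxy : G.Adj x y) :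
    l x ≤ r y ∧ l y ≤ r x := by
  obtain ⟨t, htx, hty⟩ := (h x y hc).1 hxy
  exact ⟨htx.1.trans hty.2, hty.1.trans htx.2⟩

theorem left_le_right_of_adj (h : IsIntervalModel G c l r) (hc : c x ≠ c y)
    (hxy : G.Adj x y) : l x ≤ r x := by
  obtain ⟨t, htx, -⟩ := (h x y hc).1 hxy
  exact htx.1.trans htx.2

theorem left_le_right_of_nbhdIncomp (h : IsIntervalModel G c l r)
    (hb : ∀ n ∈ N, c b ≠ c n) (hinc : NbhdIncomp G N b b') : l b ≤ r b := by
  obtain ⟨n, ⟨hn, hbn⟩, -⟩ := not_subset.1 hinc.1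
  exact h.left_le_right_of_adj (hb n hn) hbn

variable (hp : ∀ n ∈ N, p ∈ Icc (l n) (r n))
include hp

theorem notMem_Icc_of_nbhdIncomp (h : IsIntervalModel G c l r)
    (hb : ∀ n ∈ N, c b ≠ c n) (hinc : NbhdIncomp G N b b') : p ∉ Icc (l b) (r b) := by
  intro hpb
  refine hinc.2 fun n hn => ⟨hn.1, ?_⟩
  exact (h b n (hb n hn.1)).2 ⟨p, hpb, hp n hn.1⟩

theorem inter_neighborSet_subset_of_right_lt (h : IsIntervalModel G c l r)
    (hb : ∀ n ∈ N, c b ≠ c n) (hb' : ∀ n ∈ N, c b' ≠ c n) (hlr' : l b' ≤ r b')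
    (hrr : r b ≤ r b') (hr' : r b' < p) :
    N ∩ G.neighborSet b ⊆ N ∩ G.neighborSet b' := by
  rintro n ⟨hn, hbn⟩
  refine ⟨hn, (h b' n (hb' n hn)).2 ⟨r b', ⟨hlr', le_rfl⟩, ?_, ?_⟩⟩
  · exact (h.le_of_adj (hb n hn) hbn).2.trans hrr
  · exact hr'.le.trans (hp n hn).2

theorem inter_neighborSet_subset_of_lt_left (h : IsIntervalModel G c l r)
    (hb : ∀ n ∈ N, c b ≠ c n) (hb' : ∀ n ∈ N, c b' ≠ c n) (hlr' : l b' ≤ r b')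
    (hll : l b' ≤ l b) (hl' : p < l b') :
    N ∩ G.neighborSet b ⊆ N ∩ G.neighborSet b' := by
  rintro n ⟨hn, hbn⟩
  refine ⟨hn, (h b' n (hb' n hn)).2 ⟨l b', ⟨le_rfl, hlr'⟩, ?_, ?_⟩⟩
  · exact (hp n hn).1.trans hl'.le
  · exact hll.trans (h.le_of_adj (hb n hn) hbn).1

theorem not_nbhdIncomp_of_right_lt (h : IsIntervalModel G c l r)
    (hb : ∀ n ∈ N, c b ≠ c n) (hb' : ∀ n ∈ N, c b' ≠ c n)
    (hr : r b < p) (hr' : r b' < p) : ¬ NbhdIncomp G N b b' := by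
  intro hinc
  rcases le_total (r b) (r b') with hrr | hrr
  · exact hinc.1 (h.inter_neighborSet_subset_of_right_lt hp hb hb'
      (h.left_le_right_of_nbhdIncomp hb' hinc.symm) hrr hr')
  · exact hinc.2 (h.inter_neighborSet_subset_of_right_lt hp hb' hb
      (h.left_le_right_of_nbhdIncomp hb hinc) hrr hr)

theorem not_nbhdIncomp_of_lt_left (h : IsIntervalModel G c l r)
    (hb : ∀ n ∈ N, c b ≠ c n) (hb' : ∀ n ∈ N, c b' ≠ c n)
    (hl : p < l b) (hl' : p < l b') : ¬ NbhdIncomp G N b b' := by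
  intro hinc
  rcases le_total (l b') (l b) with hll | hll
  · exact hinc.1 (h.inter_neighborSet_subset_of_lt_left hp hb hb'
      (h.left_le_right_of_nbhdIncomp hb' hinc.symm) hll hl')
  · exact hinc.2 (h.inter_neighborSet_subset_of_lt_left hp hb' hb
      (h.left_le_right_of_nbhdIncomp hb hinc) hll hl)

theorem not_three_pairwise_nbhdIncomp (h : IsIntervalModel G c l r) {k : Bool}
    (hN : ∀ n ∈ N, c n ≠ k) {b₁ b₂ b₃ : V} (h₁ : c b₁ = k) (h₂ : c b₂ = k) (h₃ : c b₃ = k)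
    (h₁₂ : NbhdIncomp G N b₁ b₂) (h₁₃ : NbhdIncomp G N b₁ b₃)
    (h₂₃ : NbhdIncomp G N b₂ b₃) : False := by
  have hc : ∀ b, c b = k → ∀ n ∈ N, c b ≠ c n := fun b hb n hn => hb ▸ (hN n hn).symm
  have side : ∀ b b', c b = k → NbhdIncomp G N b b' → r b < p ∨ p < l b := by
    intro b b' hb hinc
    have hpb := h.notMem_Icc_of_nbhdIncomp hp (hc b hb) hinc
    rw [mem_Icc, not_and_or, not_le, not_le] at hpb
    exact hpb.symm
  have left : ∀ {b b'}, c b = k → c b' = k → r b < p → r b' < p → ¬ NbhdIncomp G N b b' :=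
    fun hb hb' => h.not_nbhdIncomp_of_right_lt hp (hc _ hb) (hc _ hb')
  have right : ∀ {b b'}, c b = k → c b' = k → p < l b → p < l b' → ¬ NbhdIncomp G N b b' :=
    fun hb hb' => h.not_nbhdIncomp_of_lt_left hp (hc _ hb) (hc _ hb')
  rcases side b₁ b₂ h₁ h₁₂ with s₁ | s₁ <;> rcases side b₂ b₁ h₂ h₁₂.symm with s₂ | s₂ <;>
    rcases side b₃ b₁ h₃ h₁₃.symm with s₃ | s₃
  all_goals first
    | exact left h₁ h₂ s₁ s₂ h₁₂ | exact left h₁ h₃ s₁ s₃ h₁₃ | exact left h₂ h₃ s₂ s₃ h₂₃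
    | exact right h₁ h₂ s₁ s₂ h₁₂ | exact right h₁ h₃ s₁ s₃ h₁₃ | exact right h₂ h₃ s₂ s₃ h₂₃

end IsIntervalModel

theorem stmt15_general (G : SimpleGraph V) (c : V → Bool)
    (hexo : HasExobiclique G c) :
    ¬ IsIntervalBigraph G c := by
  rintro ⟨l, r, hlr⟩
  have hmodel : IsIntervalModel G c l r := hlr
  obtain ⟨M, N, hM, hN, hMc, hNc, hMN,
    ⟨b₁, b₂, b₃, -, -, -, hb₁, hb₂, hb₃, -, -, -, hb₁₂, hb₁₃, hb₂₃⟩,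
    ⟨w₁, w₂, w₃, -, -, -, hw₁, hw₂, hw₃, -, -, -, hw₁₂, hw₁₃, hw₂₃⟩⟩ := hexo
  have hcross : ∀ m ∈ M, ∀ n ∈ N, l m ≤ r n ∧ l n ≤ r m := fun m hm n hn =>
    hmodel.le_of_adj (by simp [hMc m hm, hNc n hn]) (hMN m hm n hn)
  rcases exists_forall_mem_Icc_of_cross hM hN hcross with ⟨p, hp⟩ | ⟨p, hp⟩
  · exact hmodel.not_three_pairwise_nbhdIncomp hp (fun n hn => by simp [hNc n hn])
      hb₁ hb₂ hb₃ hb₁₂ hb₁₃ hb₂₃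
  · exact hmodel.not_three_pairwise_nbhdIncomp hp (fun n hn => by simp [hMc n hn])
      hw₁ hw₂ hw₃ hw₁₂ hw₁₃ hw₂₃

/-- A bigraph containing an exobiclique is not an interval bigraph. -/
theorem stmt15 (G : SimpleGraph V) (c : V → Bool) [Fintype V]
    (hbip : ∀ x y : V, G.Adj x y → c x ≠ c y)
    (hexo : HasExobiclique G c) :
    ¬ IsIntervalBigraph G c :=
  stmt15_general G c hexo
end

section
/- A bipartite graph H (with fixed bipartition) is an interval bigraph if and only if its vertices admit a linear ordering < such that for all vertices a < b < c where a and b are in the same color class and c is in the opposite color class, if ac is an edge then bc is an edge. -/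
variable {V : Type*}

/-!
Given intervals, order the vertices by right endpoint, empty intervals first: if `a < b < x`
and `I_a` meets `I_x`, then `I_b` ends between the ends of `I_a` and `I_x`, so it meets `I_x`.
Conversely, given a good order, realise `v` as the interval from its leftmost closed neighbour
to `v` itself. For `x < y` of different colours these intervals meet iff the leftmost closed
neighbour `w` of `y` satisfies `w ≤ x`; then `w` is a neighbour of `y` of the colour of `x`,
and the forbidden pattern `w < x < y` forces `xy` to be an edge.
-/

section

variable {G : SimpleGraph V} {c : V → Bool}

theorem exists_mem_Icc_inter_Icc_iff {α : Type*} [LinearOrder α] {a b a' b' : α} :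
    (∃ t, t ∈ Set.Icc a b ∧ t ∈ Set.Icc a' b') ↔ a ≤ b ∧ a' ≤ b' ∧ a ≤ b' ∧ a' ≤ b := by
  constructor
  · rintro ⟨t, ⟨hat, htb⟩, ha't, htb'⟩
    exact ⟨hat.trans htb, ha't.trans htb', hat.trans htb', ha't.trans htb⟩
  · rintro ⟨hab, ha'b', hab', ha'b⟩
    exact ⟨max a a', ⟨le_max_left _ _, max_le hab ha'b⟩, le_max_right _ _, max_le hab' ha'b'⟩

theorem exists_linearOrder_le_of_lt {α : Type*} [LinearOrder α] (f : V → α) :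
    ∃ r : LinearOrder V, ∀ a b, r.lt a b → f a ≤ f b := by
  let : LinearOrder V := IsWellOrder.linearOrder WellOrderingRel
  refine ⟨LinearOrder.lift' (fun v => toLex (f v, v)) fun a b h => congrArg Prod.snd h,
    fun a b h => ?_⟩
  exact (Prod.Lex.lt_iff.mp h).elim le_of_lt fun h => h.1.le

theorem IsIntervalBigraph.exists_goodOrder (h : IsIntervalBigraph G c) :
    ∃ r : LinearOrder V, GoodOrder G c r := by
  obtain ⟨l, r, hlr⟩ := h
  obtain ⟨ord, hord⟩ := exists_linearOrder_le_of_lt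
    fun v => if l v ≤ r v then (r v : WithBot ℝ) else ⊥
  refine ⟨ord, fun a b x hab hbx hcab hcax hax => ?_⟩
  obtain ⟨hla, hlx, hlarx, hlxra⟩ := exists_mem_Icc_inter_Icc_iff.mp ((hlr a x hcax).mp hax)
  have hab' := hord a b hab
  have hbx' := hord b x hbx
  simp only [if_pos hla, if_pos hlx] at hab' hbx'
  by_cases hlb : l b ≤ r b
  · simp only [if_pos hlb, WithBot.coe_le_coe] at hab' hbx'
    refine (hlr b x (hcab ▸ hcax)).mpr (exists_mem_Icc_inter_Icc_iff.mpr ?_)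
    exact ⟨hlb, hlx, hlb.trans hbx', hlxra.trans hab'⟩
  · simp [if_neg hlb] at hab'

section Order

variable [ord : LinearOrder V]

theorem GoodOrder.adj_of_le_of_adj (hr : GoodOrder G c ord)
    (hbip : ∀ x y : V, G.Adj x y → c x ≠ c y) {w x y : V} (hwx : w ≤ x) (hxy : x < y)
    (hcxy : c x ≠ c y) (hwy : G.Adj w y) : G.Adj x y := by
  rcases hwx.eq_or_lt with rfl | hwx
  · exact hwy
  · have hcwx : c w = c x := by
      have := hbip w y hwy
      revert this hcxy; cases c w <;> cases c x <;> cases c y <;> simp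
    exact hr w x y hwx hxy hcwx (hcwx ▸ hcxy) hwy

variable [Fintype V] [DecidableRel G.Adj]

variable (G) in
noncomputable def leftEnd (v : V) : V :=
  (insert v (G.neighborFinset v)).min' (Finset.insert_nonempty _ _)

theorem leftEnd_le_self (v : V) : leftEnd G v ≤ v :=
  Finset.min'_le _ _ (Finset.mem_insert_self _ _)

theorem leftEnd_le_of_adj {u v : V} (h : G.Adj v u) : leftEnd G v ≤ u :=
  Finset.min'_le _ _ (Finset.mem_insert_of_mem ((G.mem_neighborFinset v u).mpr h))

theorem leftEnd_eq_self_or_adj (v : V) : leftEnd G v = v ∨ G.Adj v (leftEnd G v) := by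
  have h := Finset.min'_mem (insert v (G.neighborFinset v)) (Finset.insert_nonempty _ _)
  rwa [Finset.mem_insert, SimpleGraph.mem_neighborFinset] at h

theorem GoodOrder.adj_of_leftEnd_le (hr : GoodOrder G c ord)
    (hbip : ∀ x y : V, G.Adj x y → c x ≠ c y) {x y : V} (hxy : x < y) (hcxy : c x ≠ c y)
    (hy : leftEnd G y ≤ x) : G.Adj x y := by
  rcases leftEnd_eq_self_or_adj (G := G) y with hself | hadj
  · exact absurd (hself ▸ hy) (not_le.mpr hxy)
  · exact hr.adj_of_le_of_adj hbip hy hxy hcxy hadj.symm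

theorem GoodOrder.adj_iff_leftEnd_le (hr : GoodOrder G c ord)
    (hbip : ∀ x y : V, G.Adj x y → c x ≠ c y) {x y : V} (hcxy : c x ≠ c y) :
    G.Adj x y ↔ leftEnd G x ≤ y ∧ leftEnd G y ≤ x := by
  refine ⟨fun h => ⟨leftEnd_le_of_adj h, leftEnd_le_of_adj h.symm⟩, fun ⟨hx, hy⟩ => ?_⟩
  rcases lt_trichotomy x y with hxy | rfl | hyx
  · exact hr.adj_of_leftEnd_le hbip hxy hcxy hy
  · exact absurd rfl hcxy
  · exact (hr.adj_of_leftEnd_le hbip hyx (Ne.symm hcxy) hx).symm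

theorem GoodOrder.isIntervalBigraph (hr : GoodOrder G c ord)
    (hbip : ∀ x y : V, G.Adj x y → c x ≠ c y) : IsIntervalBigraph G c := by
  obtain ⟨φ⟩ := Order.embedding_from_countable_to_dense (α := V) (β := ℝ)
  refine ⟨fun v => φ (leftEnd G v), φ, fun x y hcxy => ?_⟩
  rw [hr.adj_iff_leftEnd_le hbip hcxy, exists_mem_Icc_inter_Icc_iff]
  simp only [φ.le_iff_le, leftEnd_le_self, true_and]

end Order

end

/-- Ordering characterization of interval bigraphs (Hell–Huang): H is an interval
bigraph iff its vertices admit a linear ordering avoiding the forbidden patterns. -/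
theorem stmt16 (G : SimpleGraph V) (c : V → Bool) [Fintype V]
    (hbip : ∀ x y : V, G.Adj x y → c x ≠ c y) :
    IsIntervalBigraph G c ↔ ∃ r : LinearOrder V, GoodOrder G c r := by
  classical
  exact ⟨IsIntervalBigraph.exists_goodOrder, fun ⟨r, hr⟩ => hr.isIntervalBigraph hbip⟩
end
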